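/- arXiv:1009.3166 — 4 statements merged into one kernel-verified Lean document; each statement's English description precedes it below -/
import Mathlib

section
/- Let h > 1, R > 0, and define c_h = (1/2)^{1/(h-1)} ((h−1)/(h+1))^{h/(h−1)} and B(x,t) = c_h t^{−1/(2h)} [R^{(h+1)/h} − t^{−(h+1)/(2h²)} |x|^{(h+1)/h}]_+^{h/(h−1)} for x ∈ ℝ^d, t > 0. Then at every point (x,t) with x ≠ 0 and R^{(h+1)/h} − t^{−(h+1)/(2h²)}|x|^{(h+1)/h} > 0, B is C² and satisfies B_t = |DB|^{h-3} ⟨D²B DB, DB⟩. -/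
open Set

variable {d : ℕ}

-- The `h`-homogeneous infinity-Laplacian `Δ_∞^h f (x) = |Df|^{h-3} ⟨D²f Df, Df⟩`,
-- with the convention that it is `0` where the gradient vanishes.
open Classical in
noncomputable def infLapH (h : ℝ) (f : EuclideanSpace ℝ (Fin d) → ℝ)
    (x : EuclideanSpace ℝ (Fin d)) : ℝ :=
  if gradient f x = 0 then 0
  else ‖gradient f x‖ ^ (h - 3) *
    (inner ℝ ((fderiv ℝ (gradient f) x) (gradient f x)) (gradient f x) : ℝ)

-- `u` satisfies `u_t = Δ_∞^h u` at the point `p = (x,t)`.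
noncomputable def solvesAt (h : ℝ) (u : EuclideanSpace ℝ (Fin d) × ℝ → ℝ)
    (p : EuclideanSpace ℝ (Fin d) × ℝ) : Prop :=
  deriv (fun τ => u (p.1, τ)) p.2 = infLapH h (fun x => u (x, p.2)) p.1

noncomputable def barenblatt (h R : ℝ) (p : EuclideanSpace ℝ (Fin d) × ℝ) : ℝ :=
  ((1/2 : ℝ) ^ (1/(h-1)) * ((h-1)/(h+1)) ^ (h/(h-1))) * p.2 ^ (-(1/(2*h))) *
    (max (R ^ ((h+1)/h) - p.2 ^ (-((h+1)/(2*h^2))) * ‖p.1‖ ^ ((h+1)/h)) 0) ^ (h/(h-1))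

/-! For `τ > 0` the solution is self-similar, `B(y, τ) = τ^(-a) F(|y| τ^(-a))` with `a = 1/(2h)` and
profile `F(ρ) = c_h [R^((h+1)/h) - ρ^((h+1)/h)]_+^(h/(h-1))`. For a radial function `φ(|y|)` the
operator reduces to `Δ_∞^h = |φ'|^(h-1) φ''`, and the scaling turns `u_t = Δ_∞^h u` into the profile
ODE `|F'|^(h-1) F'' = -a (ρ F)'`. The constant `c_h` is exactly the one for which
`|F'|^(h-1) F' = -ρ F / 2`, and differentiating this identity gives the ODE. -/

open Real Filter Topology

noncomputable def barenblattConst (h : ℝ) : ℝ :=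
  (1/2 : ℝ) ^ (1/(h-1)) * ((h-1)/(h+1)) ^ (h/(h-1))

noncomputable def barenblattProfile (h R ρ : ℝ) : ℝ :=
  barenblattConst h * max (R ^ ((h+1)/h) - ρ ^ ((h+1)/h)) 0 ^ (h/(h-1))

noncomputable def barenblattProfileDeriv (h R ρ : ℝ) : ℝ :=
  -(barenblattConst h * ((h+1)/(h-1))) * ρ ^ (1/h) * (R ^ ((h+1)/h) - ρ ^ ((h+1)/h)) ^ (1/(h-1))

lemma barenblattConst_pos {h : ℝ} (hh : 1 < h) : 0 < barenblattConst h := by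
  have : 0 < (h-1)/(h+1) := div_pos (by linarith) (by linarith)
  unfold barenblattConst
  positivity

lemma barenblattConst_normalization {h : ℝ} (hh : 1 < h) :
    (barenblattConst h * ((h+1)/(h-1))) ^ (h-1) * ((h+1)/(h-1)) = 1/2 := by
  have h1 : 0 < h - 1 := by linarith
  have hq : 0 < (h-1)/(h+1) := div_pos h1 (by linarith)
  have hc : barenblattConst h * ((h+1)/(h-1)) = ((1/2) * ((h-1)/(h+1))) ^ (1/(h-1)) := by
    rw [barenblattConst, Real.mul_rpow (by norm_num) hq.le, show h/(h-1) = 1/(h-1) + 1 by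
      field_simp; ring, Real.rpow_add_one hq.ne']
    field_simp
  rw [hc, ← Real.rpow_mul (by positivity), one_div_mul_cancel h1.ne', Real.rpow_one]
  field_simp

section Profile

variable {h R ρ : ℝ}

lemma barenblattProfile_eventuallyEq (hρ : 0 < ρ)
    (hA : 0 < R ^ ((h+1)/h) - ρ ^ ((h+1)/h)) :
    barenblattProfile h R =ᶠ[𝓝 ρ]
      fun σ => barenblattConst h * (R ^ ((h+1)/h) - σ ^ ((h+1)/h)) ^ (h/(h-1)) := by
  filter_upwards [(continuousAt_const.sub (continuousAt_id.rpow_const (Or.inl hρ.ne'))).eventually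
    (lt_mem_nhds hA)] with σ (hσ : 0 < R ^ ((h+1)/h) - σ ^ ((h+1)/h))
  rw [barenblattProfile, max_eq_left hσ.le]

lemma contDiffAt_barenblattProfile {n : WithTop ℕ∞} (hρ : 0 < ρ)
    (hA : 0 < R ^ ((h+1)/h) - ρ ^ ((h+1)/h)) :
    ContDiffAt ℝ n (barenblattProfile h R) ρ :=
  (contDiffAt_const.mul (ContDiffAt.rpow_const_of_ne
    (contDiffAt_const.sub (contDiffAt_id.rpow_const_of_ne hρ.ne')) hA.ne')).congr_of_eventuallyEq
    (barenblattProfile_eventuallyEq hρ hA)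

lemma hasDerivAt_barenblattProfile (hh : 1 < h) (hρ : 0 < ρ)
    (hA : 0 < R ^ ((h+1)/h) - ρ ^ ((h+1)/h)) :
    HasDerivAt (barenblattProfile h R) (barenblattProfileDeriv h R ρ) ρ := by
  have hF := (((Real.hasDerivAt_rpow_const (p := (h+1)/h) (Or.inl hρ.ne')).const_sub
    (R ^ ((h+1)/h))).rpow_const (p := h/(h-1)) (Or.inl hA.ne')).const_mul (barenblattConst h)
  refine (hF.congr_of_eventuallyEq (barenblattProfile_eventuallyEq hρ hA)).congr_deriv ?_
  have h1 : h - 1 ≠ 0 := by linarith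
  have h0 : h ≠ 0 := by linarith
  rw [barenblattProfileDeriv, show (h+1)/h - 1 = 1/h by field_simp; ring,
    show h/(h-1) - 1 = 1/(h-1) by field_simp; ring]
  field_simp

lemma barenblattProfileDeriv_neg (hh : 1 < h) (hρ : 0 < ρ)
    (hA : 0 < R ^ ((h+1)/h) - ρ ^ ((h+1)/h)) : barenblattProfileDeriv h R ρ < 0 := by
  have := barenblattConst_pos hh
  have : 0 < (h+1)/(h-1) := div_pos (by linarith) (by linarith)
  rw [barenblattProfileDeriv, neg_mul, neg_mul, neg_lt_zero]
  positivity

theorem barenblattProfile_ode (hh : 1 < h) (hρ : 0 < ρ)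
    (hA : 0 < R ^ ((h+1)/h) - ρ ^ ((h+1)/h)) :
    ∃ F'', HasDerivAt (barenblattProfileDeriv h R) F'' ρ ∧
      |barenblattProfileDeriv h R ρ| ^ (h-1) * F'' =
        -(1/(2*h)) * (barenblattProfile h R ρ + ρ * barenblattProfileDeriv h R ρ) := by
  have h0 : 0 < h := by linarith
  have h1 : 0 < h - 1 := by linarith
  set A := R ^ ((h+1)/h) - ρ ^ ((h+1)/h)
  set k := barenblattConst h * ((h+1)/(h-1))
  have hk : 0 < k := mul_pos (barenblattConst_pos hh) (div_pos (by linarith) h1)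
  have hA_deriv := (Real.hasDerivAt_rpow_const (p := (h+1)/h) (Or.inl hρ.ne')).const_sub
    (R ^ ((h+1)/h))
  refine ⟨_, (((Real.hasDerivAt_rpow_const (p := 1/h) (Or.inl hρ.ne')).const_mul (-k)).mul
    (hA_deriv.rpow_const (p := 1/(h-1)) (Or.inl hA.ne'))), ?_⟩
  set w := ρ ^ (1/h)
  set v := A ^ (1/(h-1))
  have hw : 0 < w := by positivity
  have hv : 0 < v := by positivity
  have hF' : barenblattProfileDeriv h R ρ = -k * w * v := rfl
  have habs : |barenblattProfileDeriv h R ρ| ^ (h-1) = k ^ (h-1) * (ρ / w) * A := by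
    rw [abs_of_neg (barenblattProfileDeriv_neg hh hρ hA), hF',
      show -(-k * w * v) = k * w * v by ring, Real.mul_rpow (by positivity) hv.le,
      Real.mul_rpow hk.le hw.le, ← Real.rpow_mul hρ.le,
      ← Real.rpow_mul hA.le, one_div_mul_cancel h1.ne', Real.rpow_one,
      show 1/h * (h-1) = 1 - 1/h by field_simp, Real.rpow_sub hρ, Real.rpow_one]
  have hF : barenblattProfile h R ρ = barenblattConst h * (v * A) := by
    rw [barenblattProfile, max_eq_left hA.le, show h/(h-1) = 1/(h-1) + 1 by field_simp; ring,
      Real.rpow_add_one hA.ne']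
  have hK : k ^ (h-1) = (h-1) / (2*(h+1)) := by
    have hnorm : k ^ (h-1) * ((h+1)/(h-1)) = 1/2 := barenblattConst_normalization hh
    field_simp at hnorm ⊢
    linarith
  have hc : barenblattConst h = k * (h-1) / (h+1) := by
    simp only [k]
    field_simp
  rw [habs, hF, hF', Real.rpow_sub_one hρ.ne', Real.rpow_sub_one hA.ne',
    show (h+1)/h - 1 = 1/h by field_simp; ring, hK, hc]
  field_simp
  ring

end Profile

section Radial

variable {E : Type*} [NormedAddCommGroup E] [InnerProductSpace ℝ E]

lemma hasFDerivAt_norm_of_ne_zero {x : E} (hx : x ≠ 0) :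
    HasFDerivAt (fun y : E => ‖y‖) (‖x‖⁻¹ • innerSL ℝ x) x := by
  have hx' : 0 < ‖x‖ := norm_pos_iff.mpr hx
  have hsqrt := (hasStrictFDerivAt_norm_sq x).hasFDerivAt.sqrt (by positivity)
  simp only [Real.sqrt_sq (norm_nonneg _)] at hsqrt
  convert hsqrt using 1
  ext y
  simp only [smul_apply, coe_innerSL_apply, smul_eq_mul, nsmul_eq_mul, Nat.cast_ofNat]
  field_simp

lemma hasFDerivAt_smul_self_comp_norm {ψ : ℝ → ℝ} {ψ' : ℝ} {x : E} (hx : x ≠ 0)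
    (hψ : HasDerivAt ψ ψ' ‖x‖) :
    HasFDerivAt (fun y => ψ ‖y‖ • y)
      (ψ ‖x‖ • ContinuousLinearMap.id ℝ E + (ψ' • ‖x‖⁻¹ • innerSL ℝ x).smulRight x) x :=
  (hψ.comp_hasFDerivAt x (hasFDerivAt_norm_of_ne_zero hx)).smul (hasFDerivAt_id x)

lemma hasGradientAt_comp_norm [CompleteSpace E] {φ : ℝ → ℝ} {φ' : ℝ} {x : E} (hx : x ≠ 0)
    (hφ : HasDerivAt φ φ' ‖x‖) :
    HasGradientAt (fun y => φ ‖y‖) ((φ' / ‖x‖) • x) x := by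
  rw [hasGradientAt_iff_hasFDerivAt]
  refine (hφ.comp_hasFDerivAt x (hasFDerivAt_norm_of_ne_zero hx)).congr_fderiv ?_
  ext y
  simp only [smul_apply, coe_innerSL_apply, smul_eq_mul, map_smul,
    InnerProductSpace.toDual_apply_apply]
  ring

end Radial

open ContinuousLinearMap in
theorem infLapH_comp_norm {h : ℝ} {φ φ' : ℝ → ℝ} {φ'' : ℝ} {x : EuclideanSpace ℝ (Fin d)}
    (hx : x ≠ 0) (hφ : ∀ᶠ r in 𝓝 ‖x‖, HasDerivAt φ (φ' r) r) (hφ' : HasDerivAt φ' φ'' ‖x‖)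
    (hne : φ' ‖x‖ ≠ 0) :
    infLapH h (fun y => φ ‖y‖) x = |φ' ‖x‖| ^ (h-1) * φ'' := by
  have hr : 0 < ‖x‖ := norm_pos_iff.mpr hx
  have hgrad : gradient (fun y => φ ‖y‖) =ᶠ[𝓝 x] fun y => (φ' ‖y‖ / ‖y‖) • y := by
    filter_upwards [(continuous_norm.tendsto x).eventually hφ, eventually_ne_nhds hx]
      with y hy hy0
    exact (hasGradientAt_comp_norm hy0 hy).gradient
  have hD := hasFDerivAt_smul_self_comp_norm (ψ := fun s => φ' s / s) hx
    (hφ'.div (hasDerivAt_id ‖x‖) hr.ne')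
  have hnorm : ‖(φ' ‖x‖ / ‖x‖) • x‖ = |φ' ‖x‖| := by
    rw [norm_smul, Real.norm_eq_abs, abs_div, abs_of_pos hr]
    field_simp
  have hpow : |φ' ‖x‖| ^ (h-1) = |φ' ‖x‖| ^ (h-3) * φ' ‖x‖ ^ 2 := by
    rw [← sq_abs, ← Real.rpow_natCast, ← Real.rpow_add (abs_pos.mpr hne)]
    ring_nf
  rw [infLapH, hgrad.self_of_nhds, hgrad.fderiv_eq, hD.fderiv,
    if_neg (smul_ne_zero (div_ne_zero hne hr.ne') hx), hnorm, hpow]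
  simp only [add_apply, smul_apply, smulRight_apply, id_apply, coe_innerSL_apply, smul_eq_mul,
    real_inner_smul_left, real_inner_smul_right, inner_add_left, real_inner_self_eq_norm_sq]
  field_simp
  ring

lemma rpow_selfSimilar (h : ℝ) {r τ : ℝ} (hr : 0 ≤ r) (hτ : 0 < τ) :
    (r * τ ^ (-(1/(2*h)))) ^ ((h+1)/h) = τ ^ (-((h+1)/(2*h^2))) * r ^ ((h+1)/h) := by
  rw [Real.mul_rpow hr (by positivity), ← Real.rpow_mul hτ.le, mul_comm]
  ring_nf

lemma barenblatt_eq_selfSimilar {h R τ : ℝ} (hτ : 0 < τ) (y : EuclideanSpace ℝ (Fin d)) :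
    barenblatt h R (y, τ) =
      τ ^ (-(1/(2*h))) * barenblattProfile h R (‖y‖ * τ ^ (-(1/(2*h)))) := by
  rw [barenblattProfile, rpow_selfSimilar h (norm_nonneg y) hτ, barenblatt, barenblattConst]
  ring

lemma hasDerivAt_selfSimilar_time {F : ℝ → ℝ} {F' a r t : ℝ} (ht : 0 < t)
    (hF : HasDerivAt F F' (r * t ^ (-a))) :
    HasDerivAt (fun τ => τ ^ (-a) * F (r * τ ^ (-a)))
      (-a * t ^ (-a-1) * (F (r * t ^ (-a)) + r * t ^ (-a) * F')) t := by
  have hp := Real.hasDerivAt_rpow_const (p := -a) (Or.inl ht.ne')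
  exact (hp.mul (hF.comp t (hp.const_mul r))).congr_deriv
    (by simp only [Function.comp_apply]; ring)

lemma rpow_selfSimilar_scaling {h t : ℝ} (hh : h ≠ 0) (ht : 0 < t) :
    (t ^ (-(1/(2*h))) * t ^ (-(1/(2*h)))) ^ (h-1) *
      (t ^ (-(1/(2*h))) * t ^ (-(1/(2*h))) * t ^ (-(1/(2*h)))) = t ^ (-(1/(2*h)) - 1) := by
  simp only [← Real.rpow_add ht, ← Real.rpow_mul ht.le]
  congr 1
  field_simp
  ring

section Barenblatt

variable {h R t : ℝ} {x : EuclideanSpace ℝ (Fin d)}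

theorem contDiffAt_barenblatt {n : WithTop ℕ∞} (hx : x ≠ 0) (ht : 0 < t)
    (hA : 0 < R ^ ((h+1)/h) - (‖x‖ * t ^ (-(1/(2*h)))) ^ ((h+1)/h)) :
    ContDiffAt ℝ n (barenblatt h R) (x, t) := by
  have hρ : 0 < ‖x‖ * t ^ (-(1/(2*h))) := by have := norm_pos_iff.mpr hx; positivity
  have hscale : ContDiffAt ℝ n
      (fun p : EuclideanSpace ℝ (Fin d) × ℝ => p.2 ^ (-(1/(2*h)))) (x, t) :=
    contDiffAt_snd.rpow_const_of_ne ht.ne'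
  have hρ' : ContDiffAt ℝ n
      (fun p : EuclideanSpace ℝ (Fin d) × ℝ => ‖p.1‖ * p.2 ^ (-(1/(2*h)))) (x, t) :=
    ((contDiffAt_norm ℝ hx).comp (x, t) contDiffAt_fst).mul hscale
  have hprofile : ContDiffAt ℝ n
      (fun p : EuclideanSpace ℝ (Fin d) × ℝ =>
        barenblattProfile h R (‖p.1‖ * p.2 ^ (-(1/(2*h))))) (x, t) :=
    (contDiffAt_barenblattProfile hρ hA).comp (g := barenblattProfile h R) (x, t) hρ'
  refine (hscale.mul hprofile).congr_of_eventuallyEq ?_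
  filter_upwards [continuousAt_snd.eventually (lt_mem_nhds ht)] with p hp
  exact barenblatt_eq_selfSimilar hp p.1

theorem hasDerivAt_barenblatt_time (hh : 1 < h) (hx : x ≠ 0) (ht : 0 < t)
    (hA : 0 < R ^ ((h+1)/h) - (‖x‖ * t ^ (-(1/(2*h)))) ^ ((h+1)/h)) :
    HasDerivAt (fun τ => barenblatt h R (x, τ))
      (-(1/(2*h)) * t ^ (-(1/(2*h)) - 1) *
        (barenblattProfile h R (‖x‖ * t ^ (-(1/(2*h)))) +
          ‖x‖ * t ^ (-(1/(2*h))) * barenblattProfileDeriv h R (‖x‖ * t ^ (-(1/(2*h)))))) t := by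
  have hρ : 0 < ‖x‖ * t ^ (-(1/(2*h))) := by have := norm_pos_iff.mpr hx; positivity
  refine (hasDerivAt_selfSimilar_time ht
    (hasDerivAt_barenblattProfile hh hρ hA)).congr_of_eventuallyEq ?_
  filter_upwards [lt_mem_nhds ht] with τ hτ
  exact barenblatt_eq_selfSimilar hτ x

theorem infLapH_barenblatt (hh : 1 < h) (hx : x ≠ 0) (ht : 0 < t)
    (hA : 0 < R ^ ((h+1)/h) - (‖x‖ * t ^ (-(1/(2*h)))) ^ ((h+1)/h)) :
    infLapH h (fun y => barenblatt h R (y, t)) x =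
      -(1/(2*h)) * t ^ (-(1/(2*h)) - 1) *
        (barenblattProfile h R (‖x‖ * t ^ (-(1/(2*h)))) +
          ‖x‖ * t ^ (-(1/(2*h))) * barenblattProfileDeriv h R (‖x‖ * t ^ (-(1/(2*h))))) := by
  set s := t ^ (-(1/(2*h)))
  have hs : 0 < s := by positivity
  have hρ : 0 < ‖x‖ * s := mul_pos (norm_pos_iff.mpr hx) hs
  obtain ⟨F'', hF'', hode⟩ := barenblattProfile_ode hh hρ hA
  have hdomain : ∀ᶠ r in 𝓝 ‖x‖, 0 < r * s ∧ 0 < R ^ ((h+1)/h) - (r * s) ^ ((h+1)/h) := by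
    have hcont : ContinuousAt (fun r => R ^ ((h+1)/h) - (r * s) ^ ((h+1)/h)) ‖x‖ :=
      continuousAt_const.sub ((continuousAt_id.mul_const s).rpow_const (Or.inl hρ.ne'))
    exact ((continuousAt_id.mul_const s).eventually (lt_mem_nhds hρ)).and
      (hcont.eventually (lt_mem_nhds hA))
  have hφ : ∀ᶠ r in 𝓝 ‖x‖, HasDerivAt (fun r => s * barenblattProfile h R (r * s))
      (s * (barenblattProfileDeriv h R (r * s) * s)) r := by
    filter_upwards [hdomain] with r hr
    exact ((hasDerivAt_barenblattProfile hh hr.1 hr.2).comp r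
      (hasDerivAt_mul_const s)).const_mul s
  have hφ' : HasDerivAt (fun r => s * (barenblattProfileDeriv h R (r * s) * s))
      (s * (F'' * s * s)) ‖x‖ := by
    have hc := hF''.comp ‖x‖ (hasDerivAt_mul_const s)
    exact (hc.mul_const s).const_mul s
  have hne : s * (barenblattProfileDeriv h R (‖x‖ * s) * s) ≠ 0 :=
    mul_ne_zero hs.ne' (mul_ne_zero (barenblattProfileDeriv_neg hh hρ hA).ne hs.ne')
  have hscale : |s * (barenblattProfileDeriv h R (‖x‖ * s) * s)| ^ (h-1) * (s * (F'' * s * s)) =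
      (s * s) ^ (h-1) * (s * s * s) * (|barenblattProfileDeriv h R (‖x‖ * s)| ^ (h-1) * F'') := by
    rw [show |s * (barenblattProfileDeriv h R (‖x‖ * s) * s)| =
        s * s * |barenblattProfileDeriv h R (‖x‖ * s)| by
        rw [abs_mul, abs_mul, abs_of_pos hs]; ring,
      Real.mul_rpow (by positivity) (abs_nonneg _)]
    ring
  rw [show (fun y => barenblatt h R (y, t)) = fun y => s * barenblattProfile h R (‖y‖ * s) from
    funext (barenblatt_eq_selfSimilar ht), infLapH_comp_norm hx hφ hφ' hne, hscale, hode,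
    rpow_selfSimilar_scaling (by linarith) ht]
  ring

end Barenblatt

theorem stmt_5_general (h R : ℝ) (hh : 1 < h)
    (x : EuclideanSpace ℝ (Fin d)) (t : ℝ) (hx : x ≠ 0) (ht : 0 < t)
    (hA : 0 < R ^ ((h+1)/h) - t ^ (-((h+1)/(2*h^2))) * ‖x‖ ^ ((h+1)/h)) :
    ContDiffAt ℝ 2 (barenblatt h R) (x, t) ∧ solvesAt h (barenblatt h R) (x, t) := by
  rw [← rpow_selfSimilar h (norm_nonneg x) ht] at hA
  refine ⟨contDiffAt_barenblatt hx ht hA, ?_⟩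
  rw [solvesAt, (hasDerivAt_barenblatt_time hh hx ht hA).deriv, infLapH_barenblatt hh hx ht hA]

theorem stmt_5 (h R : ℝ) (hh : 1 < h) (hR : 0 < R)
    (x : EuclideanSpace ℝ (Fin d)) (t : ℝ) (hx : x ≠ 0) (ht : 0 < t)
    (hA : 0 < R ^ ((h+1)/h) - t ^ (-((h+1)/(2*h^2))) * ‖x‖ ^ ((h+1)/h)) :
    ContDiffAt ℝ 2 (barenblatt h R) (x, t) ∧ solvesAt h (barenblatt h R) (x, t) :=
  stmt_5_general h R hh x t hx ht hA
end

section
/- Let h > 1, R > 0, and let B_{R,h} be the Barenblatt function B_{R,h}(x,t) = c_h t^{−1/(2h)}[R^{(h+1)/h} − t^{−(h+1)/(2h²)}|x|^{(h+1)/h}]_+^{h/(h−1)} with c_h = (1/2)^{1/(h−1)}((h−1)/(h+1))^{h/(h−1)}. Then B_{R,h} is C¹ on ℝ^d × (0,∞) and its spatial gradient vanishes on the set W = {(x,t) : x = 0 or R^{(h+1)/h} = t^{−(h+1)/(2h²)}|x|^{(h+1)/h}}. -/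
open Set

variable {d : ℕ}

/-
Away from `t = 0`, `barenblatt h R` is built by products and composition from `C¹` maps: powers
of `t`, `x ↦ ‖x‖ ^ α` with `α = (h+1)/h > 1`, and `u ↦ max u 0 ^ γ` with `γ = h/(h-1) > 1`,
whose derivative `γ · max u 0 ^ (γ-1)` is continuous and vanishes for `u ≤ 0`. By the chain rule
the spatial derivative is this outer derivative at the inner value times the derivative of
`x ↦ ‖x‖ ^ α`: on the free boundary the first factor vanishes, and at `x = 0` the second does.
-/

theorem hasDerivAt_max_zero_rpow {γ : ℝ} (hγ : 1 < γ) (s : ℝ) :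
    HasDerivAt (fun u : ℝ => max u 0 ^ γ) (γ * max s 0 ^ (γ - 1)) s := by
  have hcont {p : ℝ} (hp : 0 < p) : Continuous fun u : ℝ => max u 0 ^ p :=
    (continuous_id.max continuous_const).rpow_const fun _ => .inr hp.le
  refine hasDerivAt_of_hasDerivAt_of_ne' (g := fun u => γ * max u 0 ^ (γ - 1)) (x := 0)
    (fun u hu => ?_) (hcont (by linarith)).continuousAt
    (continuous_const.mul (hcont (by linarith))).continuousAt s
  rcases hu.lt_or_gt with hneg | hpos
  · rw [max_eq_right hneg.le, Real.zero_rpow (by linarith), mul_zero]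
    refine (hasDerivAt_const u 0).congr_of_eventuallyEq ?_
    filter_upwards [eventually_lt_nhds hneg] with v hv
    rw [max_eq_right hv.le, Real.zero_rpow (by linarith)]
  · rw [max_eq_left hpos.le]
    refine (Real.hasDerivAt_rpow_const (.inl hpos.ne')).congr_of_eventuallyEq ?_
    filter_upwards [eventually_gt_nhds hpos] with v hv
    rw [max_eq_left hv.le]

theorem contDiff_max_zero_rpow {γ : ℝ} (hγ : 1 < γ) :
    ContDiff ℝ 1 (fun u : ℝ => max u 0 ^ γ) := by
  rw [contDiff_one_iff_deriv]
  refine ⟨fun s => (hasDerivAt_max_zero_rpow hγ s).differentiableAt, ?_⟩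
  rw [funext fun s => (hasDerivAt_max_zero_rpow hγ s).deriv]
  exact continuous_const.mul <|
    (continuous_id.max continuous_const).rpow_const fun _ => .inr (by linarith)

theorem contDiffAt_barenblatt_s6 {h : ℝ} (R : ℝ) (hh : 1 < h) (x : EuclideanSpace ℝ (Fin d))
    {t : ℝ} (ht : t ≠ 0) : ContDiffAt ℝ 1 (barenblatt h R) (x, t) := by
  have hα : 1 < (h + 1) / h := (one_lt_div (by linarith)).mpr (by linarith)
  have hγ : 1 < h / (h - 1) := (one_lt_div (by linarith)).mpr (by linarith)
  have hpow (q : ℝ) :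
      ContDiffAt ℝ 1 (fun p : EuclideanSpace ℝ (Fin d) × ℝ => p.2 ^ q) (x, t) :=
    (Real.contDiffAt_rpow_const_of_ne (p := q) ht).comp (x, t) contDiffAt_snd
  have hnorm := (contDiff_norm_rpow hα).contDiffAt.comp (x, t) contDiffAt_fst
  exact (contDiffAt_const.mul (hpow _)).mul <| (contDiff_max_zero_rpow hγ).comp_contDiffAt _ <|
    contDiffAt_const.sub <| (hpow _).mul hnorm

theorem hasGradientAt_barenblatt_eq_zero {h : ℝ} (R : ℝ) (hh : 1 < h)
    {x : EuclideanSpace ℝ (Fin d)} {t : ℝ}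
    (hW : x = 0 ∨ R ^ ((h+1)/h) = t ^ (-((h+1)/(2*h^2))) * ‖x‖ ^ ((h+1)/h)) :
    HasGradientAt (fun y => barenblatt h R (y, t)) 0 x := by
  have hα : 1 < (h + 1) / h := (one_lt_div (by linarith)).mpr (by linarith)
  have hγ : 1 < h / (h - 1) := (one_lt_div (by linarith)).mpr (by linarith)
  set c := t ^ (-((h+1)/(2*h^2)))
  set g : EuclideanSpace ℝ (Fin d) → ℝ := fun y => R ^ ((h+1)/h) - c * ‖y‖ ^ ((h+1)/h)
  have hg := (hasFDerivAt_const (R ^ ((h+1)/h)) x).sub ((hasFDerivAt_norm_rpow x hα).const_mul c)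
  have hB := (((hasDerivAt_max_zero_rpow hγ (g x)).comp_hasFDerivAt x hg).const_mul
    ((1/2 : ℝ) ^ (1/(h-1)) * ((h-1)/(h+1)) ^ (h/(h-1)) * t ^ (-(1/(2*h)))))
  have hzero : (h / (h - 1) * max (g x) 0 ^ (h / (h - 1) - 1)) •
      (0 - c • (((h+1)/h) * ‖x‖ ^ ((h+1)/h - 2)) • innerSL ℝ x) = 0 := by
    rcases hW with rfl | hb
    · simp
    · have hgx : g x = 0 := by simp only [g, hb, sub_self]
      rw [hgx, max_self, Real.zero_rpow (by linarith), mul_zero, zero_smul]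
  rw [hzero, smul_zero] at hB
  rw [hasGradientAt_iff_hasFDerivAt, map_zero]
  exact hB

theorem stmt_6_general (h R : ℝ) (hh : 1 < h)
    (x : EuclideanSpace ℝ (Fin d)) (t : ℝ) (ht : 0 < t) :
    ContDiffAt ℝ 1 (barenblatt h R) (x, t) ∧
    ((x = 0 ∨ R ^ ((h+1)/h) = t ^ (-((h+1)/(2*h^2))) * ‖x‖ ^ ((h+1)/h)) →
      gradient (fun y => barenblatt h R (y, t)) x = 0) :=
  ⟨contDiffAt_barenblatt_s6 R hh x ht.ne',
    fun hW => (hasGradientAt_barenblatt_eq_zero R hh hW).gradient⟩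

theorem stmt_6 (h R : ℝ) (hh : 1 < h) (hR : 0 < R)
    (x : EuclideanSpace ℝ (Fin d)) (t : ℝ) (ht : 0 < t) :
    ContDiffAt ℝ 1 (barenblatt h R) (x, t) ∧
    ((x = 0 ∨ R ^ ((h+1)/h) = t ^ (-((h+1)/(2*h^2))) * ‖x‖ ^ ((h+1)/h)) →
      gradient (fun y => barenblatt h R (y, t)) x = 0) :=
  stmt_6_general h R hh x t ht
end

section
/- Let h > 1, α = (h−1)/(h+1), κ^{h+1} = 2α, and let s : [0,R̄] → [0,π] be the inverse of r(s) = κ∫₀^s (sin σ)^α dσ. Define X_*(r) = cos(s(r)). Then X_* is C¹ on [0,R̄], C² on (0,R̄), with X_*'(r) = −(1/κ) sin^{1−α}(s(r)) and X_*''(r) = −((1−α)/κ²) sin^{−2α}(s(r)) cos(s(r)) on (0,R̄), and |X_*'(r)|^{h−1} X_*''(r) = −(1/(h−1)) X_*(r) for r ∈ (0,R̄). -/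
/-!
The profile `s` inverts `r`, whose derivative `κ sin^α σ` is positive on `(0, π)`; so `s` is
continuous (an inverse of a continuous bijection of compact intervals) and, inside, differentiable
with `s' = 1 / (κ sin^α s)`. The chain rule gives `X' = -(1/κ) sin^(1-α) s`, which extends
continuously to the closed interval because `1 - α > 0`; hence `X` is `C¹` up to the boundary, and
one more differentiation gives `X''`. The equation `|X'|^(h-1) X'' = -X/(h-1)` then reduces to the
exponent identities `(1 - α)(h - 1) = 2α` and `κ^(h-1) κ^2 = κ^(h+1) = 2α`.
-/

open Set Real Topology Filter

section Calculus

variable {E : Type*} [NormedAddCommGroup E] [NormedSpace ℝ E] {f f' : ℝ → E} {a b : ℝ}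

theorem hasDerivWithinAt_Icc_of_hasDerivAt_Ioo (hab : a < b) (hf : ContinuousOn f (Icc a b))
    (hf' : ContinuousOn f' (Icc a b)) (hderiv : ∀ x ∈ Ioo a b, HasDerivAt f (f' x) x)
    {x : ℝ} (hx : x ∈ Icc a b) : HasDerivWithinAt f (f' x) (Icc a b) x := by
  have hdiff : DifferentiableOn ℝ f (Ioo a b) := fun y hy =>
    (hderiv y hy).differentiableAt.differentiableWithinAt
  have hlim l (hmem : Ioo a b ∈ l) (hl : l ≤ 𝓝[Icc a b] x) :
      Tendsto (deriv f) l (𝓝 (f' x)) :=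
    ((hf' x hx).tendsto.mono_left hl).congr'
      (eventually_of_mem hmem fun y hy => (hderiv y hy).deriv.symm)
  have hcont : ContinuousWithinAt f (Ioo a b) x := (hf x hx).mono Ioo_subset_Icc_self
  rcases hx.1.eq_or_lt with hxa | hax
  · subst hxa
    have hmem : Ioo a b ∈ 𝓝[>] a := Ioo_mem_nhdsGT hab
    exact (hasDerivWithinAt_Ici_of_tendsto_deriv hdiff hcont hmem <| hlim _ hmem <|
      nhdsWithin_le_of_mem (mem_of_superset hmem Ioo_subset_Icc_self)).mono Icc_subset_Ici_self
  rcases hx.2.eq_or_lt with hxb | hxb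
  · subst hxb
    have hmem : Ioo a x ∈ 𝓝[<] x := Ioo_mem_nhdsLT hab
    exact (hasDerivWithinAt_Iic_of_tendsto_deriv hdiff hcont hmem <| hlim _ hmem <|
      nhdsWithin_le_of_mem (mem_of_superset hmem Ioo_subset_Icc_self)).mono Icc_subset_Iic_self
  exact (hderiv x ⟨hax, hxb⟩).hasDerivWithinAt

theorem contDiffOn_one_Icc_of_hasDerivAt_Ioo (hab : a < b) (hf : ContinuousOn f (Icc a b))
    (hf' : ContinuousOn f' (Icc a b)) (hderiv : ∀ x ∈ Ioo a b, HasDerivAt f (f' x) x) :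
    ContDiffOn ℝ 1 f (Icc a b) := by
  have hwithin x (hx : x ∈ Icc a b) := hasDerivWithinAt_Icc_of_hasDerivAt_Ioo hab hf hf' hderiv hx
  rw [contDiffOn_one_iff_derivWithin (uniqueDiffOn_Icc hab)]
  exact ⟨fun x hx => (hwithin x hx).differentiableWithinAt,
    hf'.congr fun x hx => (hwithin x hx).derivWithin (uniqueDiffOn_Icc hab x hx)⟩

theorem contDiffOn_two_of_hasDerivAt {U : Set ℝ} {f'' : ℝ → E} (hU : IsOpen U)
    (hf : ∀ x ∈ U, HasDerivAt f (f' x) x) (hf' : ∀ x ∈ U, HasDerivAt f' (f'' x) x)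
    (hf'' : ContinuousOn f'' U) : ContDiffOn ℝ 2 f U := by
  rw [show (2 : WithTop ℕ∞) = 1 + 1 from rfl, contDiffOn_succ_iff_deriv_of_isOpen hU,
    show (1 : WithTop ℕ∞) = 0 + 1 from rfl, contDiffOn_succ_iff_deriv_of_isOpen hU]
  have hf'_deriv x (hx : x ∈ U) : HasDerivAt (deriv f) (f'' x) x :=
    (hf' x hx).congr_of_eventuallyEq <|
      eventually_of_mem (hU.mem_nhds hx) fun y hy => (hf y hy).deriv
  exact ⟨fun x hx => (hf x hx).differentiableAt.differentiableWithinAt, by simp,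
    fun x hx => (hf'_deriv x hx).differentiableAt.differentiableWithinAt, by simp,
    contDiffOn_zero.mpr <| hf''.congr fun x hx => (hf'_deriv x hx).deriv⟩

end Calculus

theorem IsCompact.continuousOn_of_invOn {X Y : Type*} [TopologicalSpace X] [TopologicalSpace Y]
    [T2Space Y] {f : X → Y} {g : Y → X} {A : Set X} {B : Set Y} (hA : IsCompact A)
    (hf : ContinuousOn f A) (hf_maps : MapsTo f A B) (hg_maps : MapsTo g B A)
    (hinv : InvOn g f A B) : ContinuousOn g B := by
  have := isCompact_iff_compactSpace.mp hA
  let e : A ≃ B :=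
    { toFun := fun x => ⟨f x, hf_maps x.2⟩
      invFun := fun y => ⟨g y, hg_maps y.2⟩
      left_inv := fun x => Subtype.ext (hinv.1 x.2)
      right_inv := fun y => Subtype.ext (hinv.2 y.2) }
  have he : Continuous e := hf.domRestrict.subtype_mk _
  rw [continuousOn_iff_continuous_domRestrict]
  exact continuous_subtype_val.comp (he.homeoOfEquivCompactToT2).symm.continuous

theorem mapsTo_Ioo_of_rightInvOn {r s : ℝ → ℝ} {a b c d : ℝ} (hc : r a = c) (hd : r b = d)
    (hmaps : MapsTo s (Icc c d) (Icc a b)) (hinv : RightInvOn s r (Icc c d)) :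
    MapsTo s (Ioo c d) (Ioo a b) := by
  intro ρ hρ
  obtain ⟨has, hsb⟩ := hmaps (Ioo_subset_Icc_self hρ)
  have hrs : r (s ρ) = ρ := hinv (Ioo_subset_Icc_self hρ)
  refine ⟨has.lt_of_ne ?_, hsb.lt_of_ne ?_⟩ <;> rintro hρ_eq
  · exact hρ.1.ne (hc ▸ hρ_eq ▸ hrs)
  · exact hρ.2.ne' (hd ▸ hρ_eq ▸ hrs)

theorem hasDerivAt_of_rightInvOn {r s : ℝ → ℝ} {r' c d ρ : ℝ}
    (hs : ContinuousOn s (Icc c d)) (hinv : RightInvOn s r (Icc c d)) (hr : HasDerivAt r r' (s ρ))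
    (hr' : r' ≠ 0) (hρ : ρ ∈ Ioo c d) : HasDerivAt s r'⁻¹ ρ :=
  hr.of_local_left_inverse (hs.continuousAt (Icc_mem_nhds hρ.1 hρ.2)) hr' <|
    eventually_of_mem (Icc_mem_nhds hρ.1 hρ.2) fun _ hx => hinv hx

section SinProfile

variable {α κ ρ : ℝ} {r s : ℝ → ℝ}

theorem hasDerivAt_mul_integral_sin_rpow (hα : 0 ≤ α) (σ : ℝ) :
    HasDerivAt (fun t => κ * ∫ τ in (0 : ℝ)..t, sin τ ^ α) (κ * sin σ ^ α) σ := by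
  have hcont : Continuous fun τ => sin τ ^ α := continuous_sin.rpow_const fun _ => Or.inr hα
  exact (intervalIntegral.integral_hasDerivAt_right (hcont.intervalIntegrable 0 σ)
    (hcont.stronglyMeasurableAtFilter _ _) hcont.continuousAt).const_mul κ

theorem strictMonoOn_Icc_zero_pi_of_hasDerivAt (hκ : 0 < κ)
    (hr : ∀ σ, HasDerivAt r (κ * sin σ ^ α) σ) : StrictMonoOn r (Icc 0 π) := by
  refine strictMonoOn_of_deriv_pos (convex_Icc _ _)
    (fun σ _ => (hr σ).continuousAt.continuousWithinAt) fun σ hσ => ?_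
  rw [interior_Icc] at hσ
  have := sin_pos_of_pos_of_lt_pi hσ.1 hσ.2
  rw [(hr σ).deriv]
  positivity

theorem continuousOn_of_invOn_Icc_zero_pi (hκ : 0 < κ)
    (hr : ∀ σ, HasDerivAt r (κ * sin σ ^ α) σ) (hr0 : r 0 = 0)
    (hs_maps : MapsTo s (Icc 0 (r π)) (Icc 0 π))
    (hinv : InvOn s r (Icc 0 π) (Icc 0 (r π))) : ContinuousOn s (Icc 0 (r π)) := by
  have hr_maps : MapsTo r (Icc 0 π) (Icc 0 (r π)) := by
    simpa only [hr0] using (strictMonoOn_Icc_zero_pi_of_hasDerivAt hκ hr).monotoneOn.mapsTo_Icc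
  exact isCompact_Icc.continuousOn_of_invOn
    (fun σ _ => (hr σ).continuousAt.continuousWithinAt) hr_maps hs_maps hinv

theorem sin_pos_of_rightInvOn (hr0 : r 0 = 0)
    (hs_maps : MapsTo s (Icc 0 (r π)) (Icc 0 π))
    (hinv : RightInvOn s r (Icc 0 (r π))) (hρ : ρ ∈ Ioo 0 (r π)) :
    0 < sin (s ρ) := by
  obtain ⟨h0, hπ⟩ := mapsTo_Ioo_of_rightInvOn hr0 rfl hs_maps hinv hρ
  exact sin_pos_of_pos_of_lt_pi h0 hπ

theorem hasDerivAt_of_invOn_Icc_zero_pi (hκ : 0 < κ)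
    (hr : ∀ σ, HasDerivAt r (κ * sin σ ^ α) σ) (hr0 : r 0 = 0)
    (hs_maps : MapsTo s (Icc 0 (r π)) (Icc 0 π))
    (hinv : InvOn s r (Icc 0 π) (Icc 0 (r π))) (hρ : ρ ∈ Ioo 0 (r π)) :
    HasDerivAt s (κ * sin (s ρ) ^ α)⁻¹ ρ := by
  have := sin_pos_of_rightInvOn hr0 hs_maps hinv.2 hρ
  exact hasDerivAt_of_rightInvOn (continuousOn_of_invOn_Icc_zero_pi hκ hr hr0 hs_maps hinv)
    hinv.2 (hr _) (by positivity) hρ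

theorem hasDerivAt_cos_comp_of_inverse (hs : HasDerivAt s (κ * sin (s ρ) ^ α)⁻¹ ρ)
    (hsin : 0 < sin (s ρ)) :
    HasDerivAt (fun x => cos (s x)) (-(1 / κ) * sin (s ρ) ^ (1 - α)) ρ := by
  refine ((hasDerivAt_cos (s ρ)).comp ρ hs).congr_deriv ?_
  rw [rpow_sub hsin, rpow_one]
  field_simp

theorem hasDerivAt_sin_rpow_comp_of_inverse (hs : HasDerivAt s (κ * sin (s ρ) ^ α)⁻¹ ρ)
    (hsin : 0 < sin (s ρ)) :
    HasDerivAt (fun x => -(1 / κ) * sin (s x) ^ (1 - α))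
      (-((1 - α) / κ ^ 2) * sin (s ρ) ^ (-(2 * α)) * cos (s ρ)) ρ := by
  refine (((hasDerivAt_rpow_const (Or.inl hsin.ne')).comp ρ
    ((hasDerivAt_sin (s ρ)).comp ρ hs)).const_mul (-(1 / κ))).congr_deriv ?_
  rw [show 1 - α - 1 = -α by ring, rpow_neg hsin.le, rpow_neg hsin.le, two_mul, rpow_add hsin]
  field_simp

end SinProfile

theorem abs_deriv_rpow_mul_deriv_two_eq {h α κ S : ℝ} (hh : 1 < h)
    (hα : α = (h - 1) / (h + 1)) (hκ : 0 < κ) (hκh : κ ^ (h + 1) = 2 * α) (hS : 0 < S)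
    (C : ℝ) :
    |-(1 / κ) * S ^ (1 - α)| ^ (h - 1) * (-((1 - α) / κ ^ 2) * S ^ (-(2 * α)) * C) =
      -(1 / (h - 1)) * C := by
  have hα_exp : (1 - α) * (h - 1) = 2 * α := by
    rw [hα]; field_simp [show h + 1 ≠ 0 by linarith]; ring
  have hκ_pow : κ ^ (h - 1) * κ ^ 2 = 2 * α := by
    rw [← rpow_natCast, ← rpow_add hκ, ← hκh]; ring_nf
  have habs : |-(1 / κ) * S ^ (1 - α)| ^ (h - 1) = S ^ (2 * α) / κ ^ (h - 1) := by
    rw [abs_mul, abs_neg, abs_of_pos (by positivity), abs_of_pos (by positivity),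
      mul_rpow (by positivity) (by positivity), one_div, inv_rpow hκ.le, ← rpow_mul hS.le,
      hα_exp, inv_mul_eq_div]
  have hS_cancel : S ^ (2 * α) * S ^ (-(2 * α)) = 1 := by
    rw [← rpow_add hS, add_neg_cancel, rpow_zero]
  have h1α : 1 - α ≠ 0 := by
    rw [hα, one_sub_div (by linarith)]; exact div_ne_zero (by ring_nf; norm_num) (by linarith)
  calc |-(1 / κ) * S ^ (1 - α)| ^ (h - 1) * (-((1 - α) / κ ^ 2) * S ^ (-(2 * α)) * C)
      = -((1 - α) / (κ ^ (h - 1) * κ ^ 2)) * (S ^ (2 * α) * S ^ (-(2 * α))) * C := by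
        rw [habs]; ring
    _ = -(1 / (h - 1)) * C := by
        rw [hκ_pow, hS_cancel, ← hα_exp]
        field_simp [(sub_pos.mpr hh).ne', h1α]

theorem stmt_9 (h α κ : ℝ) (hh : 1 < h) (hα : α = (h-1)/(h+1))
    (hκ : 0 < κ) (hκh : κ ^ (h+1) = 2*α)
    (r : ℝ → ℝ) (hr : ∀ s : ℝ, r s = κ * ∫ σ in (0:ℝ)..s, Real.sin σ ^ α)
    (Rbar : ℝ) (hRbar : Rbar = r Real.pi)
    (s : ℝ → ℝ) (hs : ∀ σ ∈ Icc 0 Real.pi, s (r σ) = σ)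
    (hs' : ∀ ρ ∈ Icc 0 Rbar, s ρ ∈ Icc 0 Real.pi ∧ r (s ρ) = ρ)
    (X : ℝ → ℝ) (hX : ∀ ρ, X ρ = Real.cos (s ρ)) :
    ContDiffOn ℝ 1 X (Icc 0 Rbar) ∧
    ContDiffOn ℝ 2 X (Ioo 0 Rbar) ∧
    ∀ ρ ∈ Ioo 0 Rbar,
      deriv X ρ = -(1/κ) * Real.sin (s ρ) ^ (1-α) ∧
      deriv (deriv X) ρ = -((1-α)/κ^2) * Real.sin (s ρ) ^ (-(2*α)) * Real.cos (s ρ) ∧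
      |deriv X ρ| ^ (h-1) * deriv (deriv X) ρ = -(1/(h-1)) * X ρ := by
  have hα_pos : 0 < α := by rw [hα]; exact div_pos (by linarith) (by linarith)
  have hα_lt : α < 1 := by rw [hα, div_lt_one (by linarith)]; linarith
  have hr_deriv σ : HasDerivAt r (κ * sin σ ^ α) σ := by
    rw [show r = _ from funext hr]; exact hasDerivAt_mul_integral_sin_rpow hα_pos.le σ
  have hr0 : r 0 = 0 := by simp [hr]
  subst hRbar
  have hR_pos : 0 < r π := hr0 ▸ strictMonoOn_Icc_zero_pi_of_hasDerivAt hκ hr_deriv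
    (left_mem_Icc.2 pi_pos.le) (right_mem_Icc.2 pi_pos.le) pi_pos
  have hs_maps : MapsTo s (Icc 0 (r π)) (Icc 0 π) := fun ρ hρ => (hs' ρ hρ).1
  have hinv : InvOn s r (Icc 0 π) (Icc 0 (r π)) := ⟨hs, fun ρ hρ => (hs' ρ hρ).2⟩
  have hs_cont := continuousOn_of_invOn_Icc_zero_pi hκ hr_deriv hr0 hs_maps hinv
  have hsin ρ (hρ : ρ ∈ Ioo 0 (r π)) := sin_pos_of_rightInvOn hr0 hs_maps hinv.2 hρ
  have hs_deriv ρ (hρ : ρ ∈ Ioo 0 (r π)) :=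
    hasDerivAt_of_invOn_Icc_zero_pi hκ hr_deriv hr0 hs_maps hinv hρ
  obtain rfl : X = fun ρ => cos (s ρ) := funext hX
  set X' := fun ρ => -(1 / κ) * sin (s ρ) ^ (1 - α)
  have hX_deriv ρ (hρ : ρ ∈ Ioo 0 (r π)) : HasDerivAt (fun ρ => cos (s ρ)) (X' ρ) ρ :=
    hasDerivAt_cos_comp_of_inverse (hs_deriv ρ hρ) (hsin ρ hρ)
  have hX'_deriv ρ (hρ : ρ ∈ Ioo 0 (r π)) :=
    hasDerivAt_sin_rpow_comp_of_inverse (hs_deriv ρ hρ) (hsin ρ hρ)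
  refine ⟨contDiffOn_one_Icc_of_hasDerivAt_Ioo hR_pos
      (continuous_cos.comp_continuousOn hs_cont) ?_ hX_deriv,
    contDiffOn_two_of_hasDerivAt isOpen_Ioo hX_deriv hX'_deriv ?_, fun ρ hρ => ?_⟩
  · exact continuousOn_const.mul <| (continuous_sin.comp_continuousOn hs_cont).rpow_const
      fun _ _ => Or.inr (by linarith)
  · have hs_cont' := hs_cont.mono Ioo_subset_Icc_self
    exact (continuousOn_const.mul <| (continuous_sin.comp_continuousOn hs_cont').rpow_const
      fun ρ hρ => Or.inl (hsin ρ hρ).ne').mul (continuous_cos.comp_continuousOn hs_cont')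
  have hderiv_eq : deriv (fun ρ => cos (s ρ)) =ᶠ[𝓝 ρ] X' :=
    eventually_of_mem (isOpen_Ioo.mem_nhds hρ) fun x hx => (hX_deriv x hx).deriv
  rw [(hX_deriv ρ hρ).deriv, hderiv_eq.deriv_eq, (hX'_deriv ρ hρ).deriv]
  exact ⟨rfl, rfl, abs_deriv_rpow_mul_deriv_two_eq hh hα hκ hκh (hsin ρ hρ) _⟩
end

section
/- Let h > 1, f(η) = (1/(|c| h)) (−c(h−1)η)^{h/(h−1)} defined for η with −cη > 0, where c ≠ 0. Then f satisfies |f'(η)|^{h−3} f'(η) f''(η) = −c on its domain. -/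
open Real

/-!
With `b = -c (h-1)` and `p = h/(h-1)`, the profile is `f η = (b η)^p / (|c| h)`, so
`f' = σ (b η)^q` and `f'' = σ q b (b η)^(q-1)` with `σ = -c/|c| = ±1` and `q = p - 1 = 1/(h-1)`.
Since `q (h-1) = 1`, the powers of `b η` in `|f'|^(h-3) f' f''` cancel, leaving `q b = -c`.
-/

theorem hasDerivAt_const_mul_rpow_const_mul {A b p x : ℝ} (hp : b * x ≠ 0 ∨ 1 ≤ p) :
    HasDerivAt (fun x => A * (b * x) ^ p) (A * (p * b) * (b * x) ^ (p - 1)) x := by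
  have hlin : HasDerivAt (fun x => b * x) b x := by
    simpa using (hasDerivAt_id x).const_mul b
  exact ((hlin.rpow_const hp).const_mul A).congr_deriv (by ring)

theorem abs_mul_rpow_rpow_mul_self_mul {σ y q k : ℝ} (a : ℝ) (hσ : |σ| = 1) (hy : 0 < y)
    (hq : q * (k + 2) = 1) :
    |σ * y ^ q| ^ k * (σ * y ^ q) * (σ * a * y ^ (q - 1)) = a := by
  have hσσ : σ * σ = 1 := by rw [← abs_mul_abs_self, hσ, one_mul]
  have hexp : q * k + (q + (q - 1)) = 0 := by linear_combination hq
  rw [abs_mul, hσ, one_mul, abs_of_pos (rpow_pos_of_pos hy q), ← rpow_mul hy.le]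
  calc y ^ (q * k) * (σ * y ^ q) * (σ * a * y ^ (q - 1))
      = σ * σ * a * (y ^ (q * k) * (y ^ q * y ^ (q - 1))) := by ring
    _ = a := by rw [hσσ, ← rpow_add hy, ← rpow_add hy, hexp, rpow_zero, one_mul, mul_one]

theorem stmt_13_general (h c : ℝ) (hh : 1 < h)
    (f : ℝ → ℝ) (hf : ∀ η, f η = (1 / (|c| * h)) * (-c * (h-1) * η) ^ (h/(h-1))) :
    ∀ η : ℝ, 0 < -c * η →
      |deriv f η| ^ (h-3) * deriv f η * deriv (deriv f) η = -c := by
  intro η hη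
  have hc : c ≠ 0 := by rintro rfl; simp at hη
  have hh1 : 0 < h - 1 := by linarith
  set b := -c * (h - 1)
  set p := h / (h - 1)
  have hp : 1 ≤ p := by rw [le_div_iff₀ hh1]; linarith
  have hcoeff : 1 / (|c| * h) * (p * b) = -c / |c| := by
    simp only [p, b]; field_simp
  have hf' : deriv f = fun x => -c / |c| * (b * x) ^ (p - 1) := by
    funext x
    rw [funext hf, ← hcoeff]
    exact (hasDerivAt_const_mul_rpow_const_mul (Or.inr hp)).deriv
  have hy : 0 < b * η := by nlinarith
  have hf'' : deriv (deriv f) η = -c / |c| * ((p - 1) * b) * (b * η) ^ (p - 1 - 1) := by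
    rw [hf']
    exact (hasDerivAt_const_mul_rpow_const_mul (Or.inl hy.ne')).deriv
  have hqb : (p - 1) * b = -c := by simp only [p, b]; field_simp; ring
  have hσ_abs : |(-c / |c|)| = 1 := by
    rw [abs_div, abs_neg, abs_abs, div_self (abs_ne_zero.mpr hc)]
  have hq : (p - 1) * (h - 3 + 2) = 1 := by simp only [p]; field_simp; ring
  rw [hf'', hf']
  simpa only [hqb] using abs_mul_rpow_rpow_mul_self_mul ((p - 1) * b) hσ_abs hy hq

theorem stmt_13 (h c : ℝ) (hh : 1 < h) (hc : c ≠ 0)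
    (f : ℝ → ℝ) (hf : ∀ η, f η = (1 / (|c| * h)) * (-c * (h-1) * η) ^ (h/(h-1))) :
    ∀ η : ℝ, 0 < -c * η →
      |deriv f η| ^ (h-3) * deriv f η * deriv (deriv f) η = -c :=
  stmt_13_general h c hh f hf
end
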